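/- arXiv:1308.3535 — 3 statements merged into one kernel-verified Lean document; each statement's English description precedes it below -/
import Mathlib

section
/- Let (X, d) be a proper metric space and let N ⊆ X be a nonempty (λ₁, λ₂)-Delone set. Then for every x ∈ N, the Voronoi cell C(x) is contained in the topological interior of its star neighborhood S(x). -/
/-- The Voronoi cell of a point `y` with respect to a set `N` in a metric space. -/
def voronoiCell {X : Type*} [MetricSpace X] (N : Set X) (y : X) : Set X :=
  {z : X | dist y z = Metric.infDist z N}

/-- The vertex set of `y`: points of `N` whose Voronoi cell meets the Voronoi cell of `y`. -/
def vertexSet {X : Type*} [MetricSpace X] (N : Set X) (y : X) : Set X :=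
  {z : X | z ∈ N ∧ (voronoiCell N z ∩ voronoiCell N y).Nonempty}

/-- The star neighborhood of `y`. -/
def starNbhd {X : Type*} [MetricSpace X] (N : Set X) (y : X) : Set X :=
  ⋃ z ∈ vertexSet N y, voronoiCell N z

lemma separated_isClosed {X : Type*} [MetricSpace X] (N : Set X) (l1 : ℝ)
    (hl1 : 0 < l1) (hsep : ∀ y ∈ N, ∀ z ∈ N, y ≠ z → l1 ≤ dist y z) :
    IsClosed N := by
  rw [← isOpen_compl_iff]
  rw [Metric.isOpen_iff]
  intro z hz
  by_cases h : ∃ y ∈ N, dist z y < l1 / 2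
  · obtain ⟨y, hyN, hy⟩ := h
    have hzy : 0 < dist z y := by
      rcases eq_or_ne z y with rfl | hne
      · exact absurd hyN hz
      · exact dist_pos.mpr hne
    refine ⟨min (dist z y) (l1 / 2), lt_min hzy (by linarith), ?_⟩
    intro w hw hwN
    have hwlt : dist w z < min (dist z y) (l1 / 2) := hw
    have hwy : w ≠ y := by
      intro heq
      have h' := (lt_min_iff.mp hwlt).1
      rw [heq, dist_comm] at h'
      exact lt_irrefl _ h'
    have := hsep w hwN y hyN hwy
    have h1 : dist w y ≤ dist w z + dist z y := dist_triangle w z y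
    have h2 : dist w z < l1 / 2 := (lt_min_iff.mp hwlt).2
    linarith
  · push_neg at h
    refine ⟨l1 / 2, by linarith, ?_⟩
    intro w hw hwN
    have h' := h w hwN
    have hw' : dist w z < l1 / 2 := hw
    rw [dist_comm] at hw'
    linarith

lemma separated_inter_closedBall_finite {X : Type*} [MetricSpace X] [ProperSpace X]
    (N : Set X) (l1 : ℝ) (hl1 : 0 < l1)
    (hsep : ∀ y ∈ N, ∀ z ∈ N, y ≠ z → l1 ≤ dist y z) (z : X) (R : ℝ) :
    (N ∩ Metric.closedBall z R).Finite := by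
  have hNc : IsClosed N := separated_isClosed N l1 hl1 hsep
  have hK : IsCompact (N ∩ Metric.closedBall z R) :=
    (isCompact_closedBall z R).inter_left hNc
  have hcov : N ∩ Metric.closedBall z R ⊆
      ⋃ y ∈ N ∩ Metric.closedBall z R, Metric.ball y (l1 / 2) := by
    intro p hp
    exact Set.mem_biUnion hp (Metric.mem_ball_self (by linarith))
  obtain ⟨b, hbsub, hbfin, hbcov⟩ :=
    hK.elim_finite_subcover_image (fun y _ => Metric.isOpen_ball) hcov
  refine hbfin.subset ?_
  intro p hp
  obtain ⟨y, hyb, hpy⟩ := Set.mem_iUnion₂.mp (hbcov hp)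
  have hyN : y ∈ N := (hbsub hyb).1
  have : p = y := by
    by_contra hne
    have := hsep p hp.1 y hyN hne
    have hlt : dist p y < l1 / 2 := hpy
    linarith
  rwa [this]

/-- In a proper metric space, for a nonempty `(λ₁, λ₂)`-Delone set `N` and `x ∈ N`,
the Voronoi cell `C(x)` is contained in the interior of the star neighborhood `S(x)`. -/
theorem voronoiCell_subset_interior_starNbhd
    {X : Type*} [MetricSpace X] [ProperSpace X] (N : Set X) (l1 l2 : ℝ)
    (hl1 : 0 < l1) (hl12 : l1 < l2) (hne : N.Nonempty)
    (hsep : ∀ y ∈ N, ∀ z ∈ N, y ≠ z → l1 ≤ dist y z)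
    (hdense : ∀ x : X, ∃ z ∈ N, dist x z ≤ l2)
    (x : X) (hx : x ∈ N) :
    voronoiCell N x ⊆ interior (starNbhd N x) := by
  intro z hz
  have hNc : IsClosed N := separated_isClosed N l1 hl1 hsep
  set κ := Metric.infDist z N with hκ
  -- the "bad" points
  set F : Set X := {y | y ∈ N ∧ dist y z ≤ l2 + 1 ∧ κ < dist y z} with hF
  have hFfin : F.Finite := by
    refine (separated_inter_closedBall_finite N l1 hl1 hsep z (l2 + 1)).subset ?_
    intro y hy
    exact ⟨hy.1, Metric.mem_closedBall.mpr hy.2.1⟩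
  -- choose ε
  set s : Finset ℝ := insert ((1:ℝ)/2) (hFfin.toFinset.image (fun y => (dist y z - κ) / 2))
    with hs
  have hsne : s.Nonempty := ⟨1/2, Finset.mem_insert_self _ _⟩
  set ε : ℝ := s.min' hsne with hε
  have hεpos : 0 < ε := by
    apply (Finset.lt_min'_iff s hsne).mpr
    intro a ha
    rcases Finset.mem_insert.mp ha with rfl | ha
    · norm_num
    · obtain ⟨y, hy, rfl⟩ := Finset.mem_image.mp ha
      have := (hFfin.mem_toFinset.mp hy).2.2
      linarith
  have hεhalf : ε ≤ 1/2 := Finset.min'_le s _ (Finset.mem_insert_self _ _)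
  have hεF : ∀ y ∈ F, κ + 2 * ε ≤ dist y z := by
    intro y hy
    have : ε ≤ (dist y z - κ) / 2 :=
      Finset.min'_le s _ (Finset.mem_insert_of_mem
        (Finset.mem_image.mpr ⟨y, hFfin.mem_toFinset.mpr hy, rfl⟩))
    linarith
  rw [mem_interior]
  refine ⟨Metric.ball z ε, ?_, Metric.isOpen_ball, Metric.mem_ball_self hεpos⟩
  intro w hw
  have hwz : dist w z < ε := hw
  -- nearest point of N to w
  obtain ⟨y, hyN, hyd⟩ := hNc.exists_infDist_eq_dist hne w
  have hwC : w ∈ voronoiCell N y := by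
    simp only [voronoiCell, Set.mem_setOf_eq]
    rw [dist_comm, ← hyd]
  -- bounds on dist y w and dist y z
  have h1 : dist w y ≤ κ + dist w z := by
    rw [← hyd]
    calc Metric.infDist w N ≤ Metric.infDist z N + dist w z :=
          Metric.infDist_le_infDist_add_dist
      _ = κ + dist w z := by rw [hκ]
  have h2 : dist w y ≤ l2 := by
    rw [← hyd]
    obtain ⟨p, hpN, hp⟩ := hdense w
    exact le_trans (Metric.infDist_le_dist_of_mem hpN) hp
  have hyz : dist y z ≤ dist y w + dist w z := dist_triangle y w z
  have hyzlt : dist y z < κ + 2 * ε := by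
    rw [dist_comm w y] at h1
    linarith
  have hyzl2 : dist y z ≤ l2 + 1 := by
    rw [dist_comm w y] at h2
    linarith
  -- y is not bad, so z ∈ C(y)
  have hzy : dist y z = κ := by
    have hge : κ ≤ dist y z := by
      rw [hκ, dist_comm y z]
      exact Metric.infDist_le_dist_of_mem hyN
    rcases eq_or_lt_of_le hge with h | h
    · exact h.symm
    · exact absurd (hεF y ⟨hyN, hyzl2, h⟩) (by linarith)
  have hyV : y ∈ vertexSet N x := ⟨hyN, ⟨z, hzy, hz⟩⟩
  exact Set.mem_biUnion hyV hwC
end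

section
/- Let (X, d) be a proper geodesic metric space (for all x, y ∈ X there is an isometric map γ : [0, d(x, y)] → X with γ(0) = x and γ(d(x, y)) = y), and let N ⊆ X be a nonempty (λ₁, λ₂)-Delone set. Then for each y ∈ N, the Voronoi cell satisfies C(y) = S(y) ∩ ⋂_{z ∈ V(y)} H(y, z), where the intersection is over the vertex set V(y). -/
/-- The "half-space" of points at least as close to `y` as to `z`. -/
def halfSpace {X : Type*} [MetricSpace X] (y z : X) : Set X :=
  {ξ : X | dist y ξ ≤ dist z ξ}

/-- In a proper geodesic metric space, for a nonempty `(λ₁, λ₂)`-Delone set `N` and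
`y ∈ N`, the Voronoi cell satisfies
`C(y) = S(y) ∩ ⋂_{z ∈ V(y)} H(y, z)`. -/
theorem voronoiCell_eq_star_inter_halfspaces
    {X : Type*} [MetricSpace X] [ProperSpace X]
    (hgeo : ∀ x y : X, ∃ γ : ℝ → X, γ 0 = x ∧ γ (dist x y) = y ∧
      ∀ s ∈ Set.Icc (0 : ℝ) (dist x y), ∀ t ∈ Set.Icc (0 : ℝ) (dist x y),
        dist (γ s) (γ t) = |s - t|)
    (N : Set X) (l1 l2 : ℝ)
    (hl1 : 0 < l1) (hl12 : l1 < l2) (hne : N.Nonempty)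
    (hsep : ∀ y ∈ N, ∀ z ∈ N, y ≠ z → l1 ≤ dist y z)
    (hdense : ∀ x : X, ∃ z ∈ N, dist x z ≤ l2)
    (y : X) (hy : y ∈ N) :
    voronoiCell N y = starNbhd N y ∩ ⋂ z ∈ vertexSet N y, halfSpace y z := by
  have hyC : y ∈ voronoiCell N y := by
    simp [voronoiCell, Metric.infDist_zero_of_mem hy]
  have hyV : y ∈ vertexSet N y := ⟨hy, ⟨y, hyC, hyC⟩⟩
  ext ξ
  constructor
  · intro hξ
    refine ⟨Set.mem_biUnion hyV hξ, ?_⟩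
    refine Set.mem_iInter₂.2 fun z hz => ?_
    have : Metric.infDist ξ N ≤ dist z ξ := by
      rw [dist_comm]; exact Metric.infDist_le_dist_of_mem hz.1
    show dist y ξ ≤ dist z ξ
    calc dist y ξ = Metric.infDist ξ N := hξ
      _ ≤ dist z ξ := this
  · rintro ⟨hS, hH⟩
    obtain ⟨z, hzV, hzC⟩ := Set.mem_iUnion₂.1 hS
    have h1 : dist y ξ ≤ dist z ξ := Set.mem_iInter₂.1 hH z hzV
    have h2 : Metric.infDist ξ N ≤ dist y ξ := by
      rw [dist_comm]; exact Metric.infDist_le_dist_of_mem hy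
    have : dist z ξ = Metric.infDist ξ N := hzC
    show dist y ξ = Metric.infDist ξ N
    linarith
end

section
/- Let G be a group with a finite symmetric generating set S, acting minimally by homeomorphisms on an infinite compact metric space X. Then for every α ∈ ℕ there exists δ > 0 such that for every nonempty open subset W ⊆ X with diam(W) < δ, the translates of W by group elements of word length at most α do not cover X, i.e. ⋃ { g • W : g ∈ G, |g| ≤ α } ≠ X. In particular, the least α_W for which the translates of W of word length at most α_W cover X satisfies α_W → ∞ as diam(W) → 0. -/
open Pointwise

/-- The word length of a group element with respect to a generating set `S`: the least
`n` such that `g` is a product of `n` elements of `S`. -/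
noncomputable def wordLength {G : Type*} [Group G] (S : Set G) (g : G) : ℕ :=
  sInf {n : ℕ | ∃ l : List G, l.length = n ∧ (∀ s ∈ l, s ∈ S) ∧ l.prod = g}

/-- For a minimal action of a group `G` with finite symmetric generating set `S`, acting
by homeomorphisms on an infinite compact metric space `X`, for every `α` there is
`δ > 0` such that for every nonempty open `W` of diameter less than `δ`, the translates
of `W` by elements of word length at most `α` do not cover `X`. -/
theorem minimal_action_small_translates_not_cover
    {G X : Type*} [Group G] [MetricSpace X] [CompactSpace X] [Infinite X]
    [MulAction G X] [ContinuousConstSMul G X]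
    (S : Finset G) (hsymm : ∀ s ∈ S, s⁻¹ ∈ S)
    (hgen : Subgroup.closure (S : Set G) = ⊤)
    (hmin : ∀ x : X, Dense (MulAction.orbit G x))
    (α : ℕ) :
    ∃ δ > (0 : ℝ), ∀ W : Set X, IsOpen W → W.Nonempty → Metric.diam W < δ →
      (⋃ g ∈ {g : G | wordLength (↑S) g ≤ α}, g • W) ≠ Set.univ := by
  classical
  -- every element of G is a product of elements of S
  have hrep : ∀ g : G, ∃ l : List G, (∀ s ∈ l, s ∈ (S : Set G)) ∧ l.prod = g := by
    intro g
    have hg : g ∈ Subgroup.closure (S : Set G) := by rw [hgen]; trivial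
    induction hg using Subgroup.closure_induction with
    | mem x hx => exact ⟨[x], by simpa using hx, by simp⟩
    | one => exact ⟨[], by simp, by simp⟩
    | mul x y hx hy ihx ihy =>
      obtain ⟨l1, hl1, hp1⟩ := ihx
      obtain ⟨l2, hl2, hp2⟩ := ihy
      refine ⟨l1 ++ l2, ?_, by simp [hp1, hp2]⟩
      intro s hs
      rcases List.mem_append.mp hs with h | h
      exacts [hl1 s h, hl2 s h]
    | inv x hx ihx =>
      obtain ⟨l, hl, hp⟩ := ihx
      refine ⟨(l.map fun a => a⁻¹).reverse, ?_, ?_⟩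
      · intro s hs
        simp only [List.mem_reverse, List.mem_map] at hs
        obtain ⟨a, ha, rfl⟩ := hs
        exact hsymm a (hl a ha)
      · rw [← List.prod_inv_reverse, hp]
  -- the ball of radius α in the word metric is finite
  set T : Set G := {g : G | wordLength (↑S) g ≤ α} with hT
  have hfin : T.Finite := by
    have : T ⊆ (fun l : List ↥S => (l.map Subtype.val).prod) ''
        {l : List ↥S | l.length ≤ α} := by
      intro g hg
      obtain ⟨l0, hl0, hp0⟩ := hrep g
      have hne : {n : ℕ | ∃ l : List G, l.length = n ∧ (∀ s ∈ l, s ∈ (S : Set G)) ∧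
          l.prod = g}.Nonempty := ⟨l0.length, l0, rfl, hl0, hp0⟩
      have hmem := Nat.sInf_mem hne
      obtain ⟨l, hlen, hlS, hlp⟩ := hmem
      refine ⟨l.pmap (fun a ha => (⟨a, ha⟩ : ↥S)) (fun a ha => hlS a ha), ?_, ?_⟩
      · simp only [Set.mem_setOf_eq, List.length_pmap, hlen]
        exact hg
      · simp only [List.map_pmap]
        rw [List.pmap_eq_map]
        simpa using hlp
    exact Set.Finite.subset (Set.Finite.image _ (List.finite_length_le ↥S α)) this
  have h1T : (1 : G) ∈ T := by
    have h0 : (0 : ℕ) ∈ {n : ℕ | ∃ l : List G, l.length = n ∧ (∀ s ∈ l, s ∈ (S : Set G)) ∧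
        l.prod = (1 : G)} := ⟨[], by simp⟩
    exact le_trans (Nat.sInf_le h0) (Nat.zero_le α)
  set Tf : Finset G := hfin.toFinset with hTf
  have h1Tf : (1 : G) ∈ Tf := by simpa [hTf] using h1T
  have hTfne : Tf.Nonempty := ⟨1, h1Tf⟩
  set N : ℕ := Tf.card with hN
  have hNpos : 0 < N := Finset.card_pos.mpr hTfne
  -- N+1 distinct points
  let p : Fin (N + 1) → X := fun i => Infinite.natEmbedding X i
  have hpinj : Function.Injective p := fun i j h => by
    exact Fin.val_injective ((Infinite.natEmbedding X).injective h)
  -- minimum pairwise distance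
  set P : Finset (Fin (N + 1) × Fin (N + 1)) := Finset.univ.filter fun q => q.1 ≠ q.2 with hP
  have hPne : P.Nonempty := by
    refine ⟨(⟨0, by omega⟩, ⟨1, by omega⟩), Finset.mem_filter.mpr ⟨Finset.mem_univ _, ?_⟩⟩
    intro h
    have := congrArg Fin.val h
    simp at this
  set e : ℝ := P.inf' hPne (fun q => dist (p q.1) (p q.2)) with he
  have hepos : 0 < e := by
    rw [he, Finset.lt_inf'_iff]
    intro q hq
    have hq12 : q.1 ≠ q.2 := by simpa [hP] using hq
    exact dist_pos.mpr fun h => hq12 (hpinj h)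
  have hele : ∀ i j : Fin (N + 1), i ≠ j → e ≤ dist (p i) (p j) := by
    intro i j hij
    exact Finset.inf'_le (b := (i, j)) (f := fun q : Fin (N + 1) × Fin (N + 1) => dist (p q.1) (p q.2)) (Finset.mem_filter.mpr ⟨Finset.mem_univ _, hij⟩)
  -- uniform continuity of each translation
  have key : ∀ g : G, ∃ d > (0 : ℝ), ∀ x y : X, dist x y < d →
      dist (g • x) (g • y) < e / 2 := by
    intro g
    have hc : UniformContinuous (fun x : X => g • x) :=
      CompactSpace.uniformContinuous_of_continuous (continuous_const_smul g)
    obtain ⟨d, hd, hdd⟩ := Metric.uniformContinuous_iff.mp hc (e / 2) (by linarith)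
    exact ⟨d, hd, fun x y h => hdd h⟩
  choose df hdfpos hdf using key
  refine ⟨Tf.inf' hTfne df, (Finset.lt_inf'_iff hTfne).mpr fun g _ => hdfpos g, ?_⟩
  intro W hWopen hWne hWdiam hcover
  -- each point p i lies in some g • W with g ∈ T
  have hsel : ∀ i : Fin (N + 1), ∃ g ∈ Tf, p i ∈ g • W := by
    intro i
    have : p i ∈ ⋃ g ∈ T, g • W := by rw [hcover]; trivial
    simp only [Set.mem_iUnion] at this
    obtain ⟨g, hg, hmem⟩ := this
    exact ⟨g, by simpa [hTf] using hg, hmem⟩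
  choose c hcTf hc using hsel
  -- pigeonhole
  obtain ⟨i, -, j, -, hij, hcij⟩ :=
    Finset.exists_ne_map_eq_of_card_lt_of_maps_to
      (s := (Finset.univ : Finset (Fin (N + 1)))) (t := Tf)
      (by simp [hN]) (fun i _ => hcTf i)
  obtain ⟨x, hxW, hx⟩ := hc i
  obtain ⟨y, hyW, hy⟩ := hc j
  have hbd : Bornology.IsBounded W := Metric.isBounded_of_compactSpace
  have hxy : dist x y < df (c i) := by
    calc dist x y ≤ Metric.diam W := Metric.dist_le_diam_of_mem hbd hxW hyW
    _ < Tf.inf' hTfne df := hWdiam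
    _ ≤ df (c i) := Finset.inf'_le _ (hcTf i)
  have hdist : dist (p i) (p j) < e / 2 := by
    rw [← hx, ← hy, hcij]
    exact hdf (c j) x y (by rwa [hcij] at hxy)
  have := hele i j hij
  linarith
end
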